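/- arXiv:2507.23497 — 4 statements merged into one kernel-verified Lean document; each statement's English description precedes it below -/
import Mathlib

section
/- In a depth-2 causal model with independent input variables (i.e., a classifier f on a feature space with all contexts allowed), a set Y is a contrastive explanation for instance (v, c) if and only if the conjunction of assignments (Y = v|Y) is an actual cause of the output being c under the modified Halpern–Pearl definition with empty witness set W. -/
lemma exists_eq_off_ne_iff_exists_reassign_ne {F : Type*} [DecidableEq F] {D : F → Type*}
    {K : Type*} (f : (∀ i, D i) → K) (v : ∀ i, D i) (c : K) (S : Finset F) :
    (∃ x : ∀ i, D i, (∀ i ∉ S, x i = v i) ∧ f x ≠ c) ↔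
      ∃ y' : ∀ i, D i, f (fun i => if i ∈ S then y' i else v i) ≠ c := by
  constructor
  · rintro ⟨x, hx, hfx⟩
    have hreassign : (fun i => if i ∈ S then x i else v i) = x := by
      funext i
      by_cases hi : i ∈ S
      · rw [if_pos hi]
      · rw [if_neg hi, hx i hi]
    exact ⟨x, hreassign.symm ▸ hfx⟩
  · rintro ⟨y', hy'⟩
    exact ⟨_, fun i hi => if_neg hi, hy'⟩

theorem stmt_2_general {F : Type*} [DecidableEq F] {D : F → Type*}
    {K : Type*}
    (f : (∀ i, D i) → K) (v : ∀ i, D i) (c : K) (hv : f v = c) (Y : Finset F) :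
    -- contrastive explanation: subset-minimal contrastive set
    ((∃ x : ∀ i, D i, (∀ i ∉ Y, x i = v i) ∧ f x ≠ c) ∧
      ∀ Y' : Finset F, Y' ⊂ Y →
        ¬ (∃ x : ∀ i, D i, (∀ i ∉ Y', x i = v i) ∧ f x ≠ c))
    ↔
    -- actual cause with W = ∅:
    -- AC1: the features in Y take the values v|Y and f v = c (the value part is
    -- automatic as Y is assigned v|Y); AC2: some resetting of Y changes the output;
    -- AC3: no proper subset of Y satisfies AC2.
    (f v = c ∧
      (∃ y' : ∀ i, D i, f (fun i => if i ∈ Y then y' i else v i) ≠ c) ∧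
      ∀ Y' : Finset F, Y' ⊂ Y →
        ¬ (∃ y' : ∀ i, D i, f (fun i => if i ∈ Y' then y' i else v i) ≠ c)) := by
  simp only [exists_eq_off_ne_iff_exists_reassign_ne f v c]
  exact ⟨fun h => ⟨hv, h⟩, And.right⟩

/-- Y is a contrastive explanation iff (Y = v|Y) is an actual cause
(modified HP definition with empty witness set) of the output being c. -/
theorem stmt_2 {F : Type*} [Fintype F] [DecidableEq F] {D : F → Type*}
    [∀ i, Nonempty (D i)] {K : Type*}
    (f : (∀ i, D i) → K) (v : ∀ i, D i) (c : K) (hv : f v = c) (Y : Finset F) :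
    -- contrastive explanation: subset-minimal contrastive set
    ((∃ x : ∀ i, D i, (∀ i ∉ Y, x i = v i) ∧ f x ≠ c) ∧
      ∀ Y' : Finset F, Y' ⊂ Y →
        ¬ (∃ x : ∀ i, D i, (∀ i ∉ Y', x i = v i) ∧ f x ≠ c))
    ↔
    -- actual cause with W = ∅:
    -- AC1: the features in Y take the values v|Y and f v = c (the value part is
    -- automatic as Y is assigned v|Y); AC2: some resetting of Y changes the output;
    -- AC3: no proper subset of Y satisfies AC2.
    (f v = c ∧
      (∃ y' : ∀ i, D i, f (fun i => if i ∈ Y then y' i else v i) ≠ c) ∧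
      ∀ Y' : Finset F, Y' ⊂ Y →
        ¬ (∃ y' : ∀ i, D i, f (fun i => if i ∈ Y' then y' i else v i) ≠ c)) :=
  stmt_2_general f v c hv Y
end

section
/- Causal explanations are input invariant: if two classifiers f₁ and f₂ satisfy f₂(x) = f₁(σ(x)) for a bijection σ of the feature space that acts coordinate-wise (σ(x) i = σ_i (x i) with each σ_i a bijection of D i), then X is a causal (abductive) explanation of f₂ at instance v if and only if X is a causal explanation of f₁ at the shifted instance σ(v). -/
/-!
A coordinate-wise bijection `σ` maps the points agreeing with `v` on `S` exactly onto the points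
agreeing with `σ v` on `S`, so `S` is a sufficient reason for `f₁ ∘ σ` at `v` iff it is one for
`f₁` at `σ v`. Subset-minimality is a statement about sufficient reasons only, so it transfers too.
-/

namespace AbductiveExplanation

variable {F : Type*} {D E : F → Type*} {K : Type*}

def IsSufficientReason (f : (∀ i, D i) → K) (v : ∀ i, D i) (S : Finset F) : Prop :=
  ∀ x : ∀ i, D i, (∀ i ∈ S, x i = v i) → f x = f v

def IsAbductiveExplanation (f : (∀ i, D i) → K) (v : ∀ i, D i) (X : Finset F) : Prop :=
  IsSufficientReason f v X ∧ ∀ X' : Finset F, X' ⊂ X → ¬ IsSufficientReason f v X'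

theorem isSufficientReason_comp_piCongrRight (f : (∀ i, E i) → K) (σ : ∀ i, D i ≃ E i)
    (v : ∀ i, D i) (S : Finset F) :
    IsSufficientReason (f ∘ Equiv.piCongrRight σ) v S ↔
      IsSufficientReason f (Equiv.piCongrRight σ v) S := by
  unfold IsSufficientReason
  refine (Equiv.piCongrRight σ).forall_congr fun {x} => ?_
  simp only [Function.comp_apply, Equiv.piCongrRight_apply, Pi.map_apply,
    (σ _).apply_eq_iff_eq]

theorem isAbductiveExplanation_comp_piCongrRight (f : (∀ i, E i) → K) (σ : ∀ i, D i ≃ E i)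
    (v : ∀ i, D i) (X : Finset F) :
    IsAbductiveExplanation (f ∘ Equiv.piCongrRight σ) v X ↔
      IsAbductiveExplanation f (Equiv.piCongrRight σ v) X := by
  simp only [IsAbductiveExplanation, isSufficientReason_comp_piCongrRight]

end AbductiveExplanation

open AbductiveExplanation in
theorem stmt_9_general {F : Type*} {D : F → Type*} {K : Type*}
    (f₁ f₂ : (∀ i, D i) → K) (σ : ∀ i, D i ≃ D i)
    (hshift : ∀ x : ∀ i, D i, f₂ x = f₁ (fun i => σ i (x i)))
    (v : ∀ i, D i) (X : Finset F) :
    -- X is a causal/abductive explanation of f₂ at v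
    ((∀ x : ∀ i, D i, (∀ i ∈ X, x i = v i) → f₂ x = f₂ v) ∧
      ∀ X' : Finset F, X' ⊂ X →
        ¬ (∀ x : ∀ i, D i, (∀ i ∈ X', x i = v i) → f₂ x = f₂ v))
    ↔
    -- X is a causal/abductive explanation of f₁ at the shifted instance σ(v)
    ((∀ x : ∀ i, D i, (∀ i ∈ X, x i = σ i (v i)) → f₁ x = f₁ (fun i => σ i (v i))) ∧
      ∀ X' : Finset F, X' ⊂ X →
        ¬ (∀ x : ∀ i, D i, (∀ i ∈ X', x i = σ i (v i)) →
            f₁ x = f₁ (fun i => σ i (v i)))) := by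
  obtain rfl : f₂ = f₁ ∘ Equiv.piCongrRight σ := funext hshift
  exact isAbductiveExplanation_comp_piCongrRight f₁ σ v X

/-- causal (abductive) explanations are input invariant under
coordinate-wise bijections of the feature space. -/
theorem stmt_9 {F : Type*} [Fintype F] [DecidableEq F] {D : F → Type*}
    [∀ i, Nonempty (D i)] {K : Type*}
    (f₁ f₂ : (∀ i, D i) → K) (σ : ∀ i, D i ≃ D i)
    (hshift : ∀ x : ∀ i, D i, f₂ x = f₁ (fun i => σ i (x i)))
    (v : ∀ i, D i) (X : Finset F) :
    -- X is a causal/abductive explanation of f₂ at v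
    ((∀ x : ∀ i, D i, (∀ i ∈ X, x i = v i) → f₂ x = f₂ v) ∧
      ∀ X' : Finset F, X' ⊂ X →
        ¬ (∀ x : ∀ i, D i, (∀ i ∈ X', x i = v i) → f₂ x = f₂ v))
    ↔
    -- X is a causal/abductive explanation of f₁ at the shifted instance σ(v)
    ((∀ x : ∀ i, D i, (∀ i ∈ X, x i = σ i (v i)) → f₁ x = f₁ (fun i => σ i (v i))) ∧
      ∀ X' : Finset F, X' ⊂ X →
        ¬ (∀ x : ∀ i, D i, (∀ i ∈ X', x i = σ i (v i)) →
            f₁ x = f₁ (fun i => σ i (v i)))) :=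
  stmt_9_general f₁ f₂ σ hshift v X
end

section
/- If an instance (v, c) has a unique abductive explanation X, then every feature i ∈ X forms a singleton contrastive explanation ({i} is contrastive), i.e., each feature in X is a but-for cause. -/
/-!
If feature `i` were not a but-for cause, fixing every feature except `i` would already force the
prediction `c`, so `univ.erase i` is sufficient. Every sufficient set contains a subset-minimal
one, which by uniqueness is `X`; hence `X ⊆ univ.erase i`, contradicting `i ∈ X`.
-/

def IsSufficient {F : Type*} {D : F → Type*} {K : Type*} (f : (∀ i, D i) → K) (v : ∀ i, D i)
    (c : K) (S : Finset F) : Prop :=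
  ∀ x : ∀ i, D i, (∀ i ∈ S, x i = v i) → f x = c

theorem le_of_minimal_unique {α : Type*} [PartialOrder α] [WellFoundedLT α] {P : α → Prop}
    {a : α} (huniq : ∀ b, Minimal P b → b = a) {b : α} (hb : P b) : a ≤ b := by
  obtain ⟨m, hmb, hm⟩ := exists_minimal_le_of_wellFoundedLT P b hb
  exact huniq m hm ▸ hmb

theorem isSufficient_univ_erase {F : Type*} [Fintype F] [DecidableEq F] {D : F → Type*}
    {K : Type*} {f : (∀ i, D i) → K} {v : ∀ i, D i} {c : K} {i : F}
    (h : ∀ x : ∀ i, D i, (∀ j ∉ ({i} : Finset F), x j = v j) → f x = c) :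
    IsSufficient f v c (Finset.univ.erase i) :=
  fun x hx ↦ h x fun j hj ↦
    hx j (Finset.mem_erase.2 ⟨Finset.notMem_singleton.1 hj, Finset.mem_univ j⟩)

theorem stmt_13_general {F : Type*} [Fintype F] [DecidableEq F] {D : F → Type*}
    {K : Type*}
    (f : (∀ i, D i) → K)
    (v : ∀ i, D i) (c : K) (X : Finset F)
    -- X is the unique abductive explanation
    (huniq : ∀ X' : Finset F,
      ((∀ x : ∀ i, D i, (∀ i ∈ X', x i = v i) → f x = c) ∧
        ∀ X'' : Finset F, X'' ⊂ X' →
          ¬ (∀ x : ∀ i, D i, (∀ i ∈ X'', x i = v i) → f x = c)) → X' = X) :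
    ∀ i ∈ X, ∃ x : ∀ i, D i, (∀ j ∉ ({i} : Finset F), x j = v j) ∧ f x ≠ c := by
  intro i hi
  by_contra! h
  have hX : X ⊆ Finset.univ.erase i :=
    le_of_minimal_unique (P := IsSufficient f v c)
      (fun X' hX' ↦ huniq X' (minimal_iff_forall_lt.1 hX')) (isSufficient_univ_erase h)
  simpa using hX hi

/-- if an instance has a unique abductive explanation X, then every
feature in X is a but-for cause, i.e., each singleton {i} with i ∈ X is
contrastive. -/
theorem stmt_13 {F : Type*} [Fintype F] [DecidableEq F] {D : F → Type*}
    [∀ i, Nontrivial (D i)] {K : Type*}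
    (f : (∀ i, D i) → K) (hnc : ∃ a b, f a ≠ f b)
    (v : ∀ i, D i) (c : K) (hv : f v = c) (X : Finset F)
    -- X is an abductive explanation
    (hXs : ∀ x : ∀ i, D i, (∀ i ∈ X, x i = v i) → f x = c)
    (hXm : ∀ X' : Finset F, X' ⊂ X →
      ¬ (∀ x : ∀ i, D i, (∀ i ∈ X', x i = v i) → f x = c))
    -- X is the unique abductive explanation
    (huniq : ∀ X' : Finset F,
      ((∀ x : ∀ i, D i, (∀ i ∈ X', x i = v i) → f x = c) ∧
        ∀ X'' : Finset F, X'' ⊂ X' →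
          ¬ (∀ x : ∀ i, D i, (∀ i ∈ X'', x i = v i) → f x = c)) → X' = X) :
    ∀ i ∈ X, ∃ x : ∀ i, D i, (∀ j ∉ ({i} : Finset F), x j = v j) ∧ f x ≠ c :=
  stmt_13_general f v c X huniq
end

section
/- If b is a baseline with f b ≠ c, then in the ordered occlusion procedure replacing features of v by baseline values one at a time, there is a first index k at which the resulting input is no longer classified c, and the set of the first k replaced features is a contrastive set containing a contrastive explanation. -/
/-! Along the occlusion path `x 0 = v, …, x n = b` the label `c` is eventually lost, since
`f b ≠ c`; the first input `x k` where this happens differs from `v` only on `S k`, so `S k` is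
contrastive, and well-foundedness of `⊂` on finsets yields a minimal contrastive subset. -/

open Finset Function

section Contrastive

variable {F : Type*} {D : F → Type*} {K : Type*}

def IsContrastive (f : (∀ i, D i) → K) (v : ∀ i, D i) (c : K) (Y : Finset F) : Prop :=
  ∃ y : ∀ i, D i, (∀ i ∉ Y, y i = v i) ∧ f y ≠ c

variable {f : (∀ i, D i) → K} {v : ∀ i, D i} {c : K}

theorem isContrastive_piecewise [DecidableEq F] {Y : Finset F} {b : ∀ i, D i}
    (h : f (Y.piecewise b v) ≠ c) : IsContrastive f v c Y :=
  ⟨Y.piecewise b v, fun _ hi => piecewise_eq_of_notMem _ _ _ hi, h⟩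

theorem IsContrastive.exists_minimal_subset {Y₀ : Finset F} (h : IsContrastive f v c Y₀) :
    ∃ Y ⊆ Y₀, IsContrastive f v c Y ∧ ∀ Y' ⊂ Y, ¬ IsContrastive f v c Y' := by
  obtain ⟨Y, hY, hmin⟩ := exists_minimal_le_of_wellFoundedLT _ Y₀ h
  exact ⟨Y, hY, hmin.prop, fun _ hlt => hmin.not_prop_of_lt hlt⟩

end Contrastive

theorem mem_image_filter_lt_of_surjective {F : Type*} [DecidableEq F] {n : ℕ} {p : Fin n → F}
    (hp : Surjective p) (i : F) : i ∈ (univ.filter fun j : Fin n => (j : ℕ) < n).image p := by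
  obtain ⟨j, rfl⟩ := hp i
  exact mem_image_of_mem p (mem_filter.2 ⟨mem_univ j, j.2⟩)

theorem stmt_17_general {F : Type*} [DecidableEq F] {D : F → Type*}
    {K : Type*}
    (f : (∀ i, D i) → K) (v b : ∀ i, D i) (c : K) (hb : f b ≠ c)
    (n : ℕ) (p : Fin n → F) (hp : Function.Bijective p)
    (S : ℕ → Finset F)
    (hS : ∀ k, S k = (Finset.univ.filter (fun j : Fin n => (j : ℕ) < k)).image p)
    (x : ℕ → ∀ i, D i)
    (hx : ∀ k, x k = fun i => if i ∈ S k then b i else v i) :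
    ∃ k ≤ n,
      f (x k) ≠ c ∧
      (∀ m < k, f (x m) = c) ∧
      -- S_k is a contrastive set
      (∃ y : ∀ i, D i, (∀ i ∉ S k, y i = v i) ∧ f y ≠ c) ∧
      -- and hence contains a contrastive explanation
      (∃ Y : Finset F, Y ⊆ S k ∧
        (∃ y : ∀ i, D i, (∀ i ∉ Y, y i = v i) ∧ f y ≠ c) ∧
        ∀ Y' : Finset F, Y' ⊂ Y →
          ¬ (∃ y : ∀ i, D i, (∀ i ∉ Y', y i = v i) ∧ f y ≠ c)) := by
  classical
  have hxS : ∀ k, x k = (S k).piecewise b v := hx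
  have hxn : x n = b := by
    funext i
    rw [hxS, piecewise_eq_of_mem _ _ _ (hS n ▸ mem_image_filter_lt_of_surjective hp.2 i)]
  have hex : ∃ k, f (x k) ≠ c := ⟨n, hxn ▸ hb⟩
  have hk : f (x (Nat.find hex)) ≠ c := Nat.find_spec hex
  have hcontr : IsContrastive f v c (S (Nat.find hex)) :=
    isContrastive_piecewise (hxS _ ▸ hk)
  exact ⟨Nat.find hex, Nat.find_min' hex (hxn ▸ hb), hk,
    fun m hm => not_not.1 (Nat.find_min hex hm), hcontr, hcontr.exists_minimal_subset⟩

/-- in the ordered occlusion procedure with a baseline classified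
differently, there is a first index k at which the classification changes; the
first k replaced features form a contrastive set containing a contrastive
explanation. -/
theorem stmt_17 {F : Type*} [Fintype F] [DecidableEq F] {D : F → Type*}
    [∀ i, Nonempty (D i)] {K : Type*}
    (f : (∀ i, D i) → K) (v b : ∀ i, D i) (c : K) (hv : f v = c) (hb : f b ≠ c)
    (n : ℕ) (hn : n = Fintype.card F) (p : Fin n → F) (hp : Function.Bijective p)
    (S : ℕ → Finset F)
    (hS : ∀ k, S k = (Finset.univ.filter (fun j : Fin n => (j : ℕ) < k)).image p)
    (x : ℕ → ∀ i, D i)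
    (hx : ∀ k, x k = fun i => if i ∈ S k then b i else v i) :
    ∃ k ≤ n,
      f (x k) ≠ c ∧
      (∀ m < k, f (x m) = c) ∧
      -- S_k is a contrastive set
      (∃ y : ∀ i, D i, (∀ i ∉ S k, y i = v i) ∧ f y ≠ c) ∧
      -- and hence contains a contrastive explanation
      (∃ Y : Finset F, Y ⊆ S k ∧
        (∃ y : ∀ i, D i, (∀ i ∉ Y, y i = v i) ∧ f y ≠ c) ∧
        ∀ Y' : Finset F, Y' ⊂ Y →
          ¬ (∃ y : ∀ i, D i, (∀ i ∉ Y', y i = v i) ∧ f y ≠ c)) :=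
  stmt_17_general f v b c hb n p hp S hS x hx
end
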